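/- Let D = {z ∈ ℍ : |Re z| ≤ 1/2, |z| ≥ 1} be the standard fundamental domain of SL₂(ℤ) acting on the upper half plane, and let Δ = √3/2. For r ≤ 1, a unimodular lattice Λ ⊂ ℝ² satisfies Λ ∩ B(r/√Δ) = {0} (with B the open Euclidean ball) if and only if the point of D representing Λ under the identification of the modular surface has imaginary part at most Δ/r². In particular, if g = [[a, b],[0, 1/a]] and the point z = (i·(1/a) − b)/a lies in D with Im z ≤ Δ/r², then every nonzero vector v of gℤ² satisfies ‖v‖² ≥ a² ≥ r²/Δ. -/

import Mathlib

lemma key_in_D (x y : ℝ) (hy : 0 < y) (hx : |x| ≤ 1 / 2) (hxy : 1 ≤ x ^ 2 + y ^ 2)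
    (m n : ℤ) (h : ¬(m = 0 ∧ n = 0)) :
    1 ≤ ((m : ℝ) + n * x) ^ 2 + (n : ℝ) ^ 2 * y ^ 2 := by
  obtain ⟨hx1, hx2⟩ := abs_le.mp hx
  have h34 : 3 / 4 ≤ y ^ 2 := by nlinarith
  by_cases hn : n = 0
  · have hm : m ≠ 0 := by tauto
    have hm1 : 1 ≤ |m| := Int.one_le_abs hm
    have hmsq : (1 : ℤ) ≤ m ^ 2 := by nlinarith [sq_abs m]
    have hmsq' : (1 : ℝ) ≤ (m : ℝ) ^ 2 := by exact_mod_cast hmsq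
    subst hn
    push_cast
    nlinarith
  · have hn1 : 1 ≤ |n| := Int.one_le_abs hn
    by_cases h2 : 2 ≤ |n|
    · have h4 : (4 : ℝ) ≤ (n : ℝ) ^ 2 := by
        have : (2 : ℤ) ^ 2 ≤ n ^ 2 := by
          have := sq_abs n
          nlinarith [sq_abs n]
        exact_mod_cast by nlinarith [this]
      nlinarith [sq_nonneg ((m : ℝ) + n * x)]
    · have hn1' : |n| = 1 := by omega
      have hN : (n : ℝ) = 1 ∨ (n : ℝ) = -1 := by
        rcases abs_eq (by norm_num : (0:ℤ) ≤ 1) |>.mp hn1' with h | h <;>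
          [left; right] <;> exact_mod_cast h
      by_cases hm : m = 0
      · subst hm
        rcases hN with h | h <;> rw [h] <;> push_cast <;> nlinarith
      · have hm1 : 1 ≤ |m| := Int.one_le_abs hm
        have hM : (1 : ℝ) ≤ (m : ℝ) ∨ (m : ℝ) ≤ -1 := by
          have : 1 ≤ m ∨ m ≤ -1 := by omega
          rcases this with h | h
          · left; exact_mod_cast h
          · right; exact_mod_cast h
        rcases hN with h | h <;> rw [h] <;> rcases hM with hM | hM <;>
          nlinarith [sq_nonneg ((m : ℝ) + x - 1/2), sq_nonneg ((m : ℝ) + x + 1/2),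
            sq_nonneg ((m : ℝ) - x - 1/2), sq_nonneg ((m : ℝ) - x + 1/2)]

theorem targets_in_fundamental_domain (a b r : ℝ) (ha : 0 < a)
    (hr : 0 < r) (hr1 : r ≤ 1)
    (hD1 : |b / a| ≤ 1 / 2) (hD2 : 1 ≤ b ^ 2 / a ^ 2 + 1 / a ^ 4) :
    letI Δ : ℝ := Real.sqrt 3 / 2
    ((∀ m n : ℤ, ¬(m = 0 ∧ n = 0) →
        r ^ 2 / Δ ≤ (m * a + n * b) ^ 2 + ((n : ℝ) / a) ^ 2) ↔
      1 / a ^ 2 ≤ Δ / r ^ 2) ∧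
    (1 / a ^ 2 ≤ Δ / r ^ 2 →
      r ^ 2 / Δ ≤ a ^ 2 ∧
      ∀ m n : ℤ, ¬(m = 0 ∧ n = 0) →
        a ^ 2 ≤ (m * a + n * b) ^ 2 + ((n : ℝ) / a) ^ 2) := by
  set Δ : ℝ := Real.sqrt 3 / 2 with hΔdef
  have hΔ : 0 < Δ := by
    have : 0 < Real.sqrt 3 := Real.sqrt_pos.mpr (by norm_num)
    rw [hΔdef]; linarith
  have ha2 : 0 < a ^ 2 := by positivity
  have hr2 : 0 < r ^ 2 := by positivity
  -- equivalence of the two inequalities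
  have hequiv : r ^ 2 / Δ ≤ a ^ 2 ↔ 1 / a ^ 2 ≤ Δ / r ^ 2 := by
    rw [div_le_iff₀ hΔ, div_le_div_iff₀ ha2 hr2]
    constructor <;> intro h <;> nlinarith
  -- the key geometric lemma
  have hkey : ∀ m n : ℤ, ¬(m = 0 ∧ n = 0) →
      a ^ 2 ≤ (m * a + n * b) ^ 2 + ((n : ℝ) / a) ^ 2 := by
    intro m n hmn
    have hx : |b / a| ≤ 1 / 2 := hD1
    have hxy : 1 ≤ (b / a) ^ 2 + (1 / a ^ 2) ^ 2 := by
      have h1 : (b / a) ^ 2 = b ^ 2 / a ^ 2 := by ring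
      have h2 : (1 / a ^ 2) ^ 2 = 1 / a ^ 4 := by ring
      rw [h1, h2]; exact hD2
    have hy : 0 < 1 / a ^ 2 := by positivity
    have hmain := key_in_D (b / a) (1 / a ^ 2) hy hx hxy m n hmn
    have hrw : ((m : ℝ) * a + n * b) ^ 2 + ((n : ℝ) / a) ^ 2 =
        a ^ 2 * (((m : ℝ) + n * (b / a)) ^ 2 + (n : ℝ) ^ 2 * (1 / a ^ 2) ^ 2) := by
      field_simp
    rw [hrw]
    nlinarith
  constructor
  · constructor
    · intro h
      have := h 1 0 (by norm_num)
      simp at this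
      rw [← hequiv]
      calc r ^ 2 / Δ ≤ (1 * a + 0 * b) ^ 2 + ((0 : ℝ) / a) ^ 2 := by
            have := h 1 0 (by norm_num); exact_mod_cast this
        _ = a ^ 2 := by norm_num
    · intro h m n hmn
      have h1 : r ^ 2 / Δ ≤ a ^ 2 := hequiv.mpr h
      exact h1.trans (hkey m n hmn)
  · intro h
    exact ⟨hequiv.mpr h, hkey⟩
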